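/- arXiv:2201.11948 — 2 statements merged into one kernel-verified Lean document; each statement's English description precedes it below -/
import Mathlib

section
/- Let O₁, O₀ be square-integrable real random variables and X a square-integrable random vector with nonsingular covariance Σ_X. Set β_j = Σ_X^{-1} Cov(X, O_j) for j = 0, 1, and let 0 < π < 1. Then π·Var(O₁ − X^T β₁) + (1−π)·Var(O₀ − X^T β₀) + (πβ₁ − (1−π)β₀)^T Σ_X (πβ₁ − (1−π)β₀) = π·Var(O₁) + (1−π)·Var(O₀) − π(1−π)(β₁+β₀)^T Σ_X (β₁+β₀). -/
open MeasureTheory ProbabilityTheory Filter Matrix Set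
open scoped BigOperators NNReal Topology ProbabilityTheory

noncomputable def evar {Ω : Type*} [MeasurableSpace Ω] (μ : Measure Ω) (f : Ω → ℝ) : ℝ :=
  ∫ ω, (f ω - ∫ x, f x ∂μ) ^ 2 ∂μ

noncomputable def ecov {Ω : Type*} [MeasurableSpace Ω] (μ : Measure Ω) (f g : Ω → ℝ) : ℝ :=
  ∫ ω, (f ω - ∫ x, f x ∂μ) * (g ω - ∫ x, g x ∂μ) ∂μ

noncomputable def covVec {Ω : Type*} [MeasurableSpace Ω] (μ : Measure Ω) {d : ℕ}
    (X : Ω → Fin d → ℝ) (f : Ω → ℝ) : Fin d → ℝ :=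
  fun k => ecov μ (fun ω => X ω k) f

noncomputable def covMat {Ω : Type*} [MeasurableSpace Ω] (μ : Measure Ω) {d : ℕ}
    (X : Ω → Fin d → ℝ) : Matrix (Fin d) (Fin d) ℝ :=
  Matrix.of fun k l => ecov μ (fun ω => X ω k) (fun ω => X ω l)

/-!
Covariance is bilinear, so `Var(O - Xᵀβ) = Var O - 2 βᵀ Cov(X, O) + βᵀ Σ_X β`; for the
regression coefficient, `Σ_X β = Cov(X, O)` and this is `Var O - βᵀ Σ_X β`. What remains is an
identity between values of the symmetric quadratic form `Σ_X`, polynomial in `π`.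
-/

section Covariance

variable {Ω : Type*} [MeasurableSpace Ω] {μ : Measure Ω}

lemma ecov_eq_covariance (f g : Ω → ℝ) : ecov μ f g = cov[f, g; μ] := rfl

lemma evar_eq_covariance (f : Ω → ℝ) : evar μ f = cov[f, f; μ] := by
  simp only [evar, covariance, sq]

lemma covMat_isSymm {d : ℕ} (X : Ω → Fin d → ℝ) : (covMat μ X).IsSymm :=
  Matrix.IsSymm.ext fun _ _ => covariance_comm _ _

variable [IsFiniteMeasure μ] {d : ℕ} {X : Ω → Fin d → ℝ} {f : Ω → ℝ}

lemma evar_sub_sum_mul (hX : ∀ k, MemLp (fun ω => X ω k) 2 μ) (hf : MemLp f 2 μ)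
    (β : Fin d → ℝ) :
    evar μ (fun ω => f ω - ∑ k, X ω k * β k)
      = evar μ f - 2 * (β ⬝ᵥ covVec μ X f) + β ⬝ᵥ covMat μ X *ᵥ β := by
  have hXβ : ∀ k, MemLp (fun ω => X ω k * β k) 2 μ := fun k => (hX k).mul_const (β k)
  have hfit : MemLp (fun ω => ∑ k, X ω k * β k) 2 μ := memLp_finsetSum _ fun k _ => hXβ k
  have hlin : ∑ k, cov[fun ω => X ω k, f; μ] * β k = β ⬝ᵥ covVec μ X f := by
    simp only [dotProduct, covVec, ecov_eq_covariance, mul_comm]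
  have hquad : ∑ k, ∑ l, cov[fun ω => X ω k, fun ω => X ω l; μ] * β k * β l
      = β ⬝ᵥ covMat μ X *ᵥ β := by
    simp only [dotProduct, mulVec, covMat, ecov_eq_covariance, of_apply, Finset.mul_sum]
    exact Finset.sum_congr rfl fun k _ => Finset.sum_congr rfl fun l _ => by ring
  rw [evar_eq_covariance, evar_eq_covariance, covariance_fun_sub_fun_sub hf hfit hf hfit,
    covariance_comm f (fun ω => ∑ k, X ω k * β k), covariance_fun_sum_left hXβ hf,
    covariance_fun_sum_fun_sum hXβ hXβ]
  simp only [covariance_mul_const_left, covariance_mul_const_right, hlin, hquad]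
  ring

lemma evar_sub_sum_mul_of_mulVec_eq (hX : ∀ k, MemLp (fun ω => X ω k) 2 μ) (hf : MemLp f 2 μ)
    {β : Fin d → ℝ} (hβ : covMat μ X *ᵥ β = covVec μ X f) :
    evar μ (fun ω => f ω - ∑ k, X ω k * β k) = evar μ f - β ⬝ᵥ covMat μ X *ᵥ β := by
  rw [evar_sub_sum_mul hX hf, ← hβ]
  ring

end Covariance

namespace Matrix

variable {n R : Type*} [Fintype n] [CommRing R] {A : Matrix n n R}

lemma IsSymm.dotProduct_mulVec_comm (hA : A.IsSymm) (u v : n → R) :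
    u ⬝ᵥ A *ᵥ v = v ⬝ᵥ A *ᵥ u := by
  rw [dotProduct_mulVec, ← mulVec_transpose, hA.eq, dotProduct_comm]

lemma IsSymm.dotProduct_mulVec_smul_sub_smul (hA : A.IsSymm) (p : R) (u v : n → R) :
    (p • u - (1 - p) • v) ⬝ᵥ A *ᵥ (p • u - (1 - p) • v)
      = p * (u ⬝ᵥ A *ᵥ u) + (1 - p) * (v ⬝ᵥ A *ᵥ v)
        - p * (1 - p) * ((u + v) ⬝ᵥ A *ᵥ (u + v)) := by
  simp only [mulVec_add, mulVec_sub, mulVec_smul, dotProduct_add, dotProduct_sub, add_dotProduct,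
    sub_dotProduct, smul_dotProduct, dotProduct_smul, smul_eq_mul, hA.dotProduct_mulVec_comm v u]
  ring

end Matrix

theorem stmt2_general {Ω : Type*} [MeasurableSpace Ω] (μ : Measure Ω) [IsProbabilityMeasure μ]
    {d : ℕ} (X : Ω → Fin d → ℝ) (O₀ O₁ : Ω → ℝ)
    (hX : MemLp X 2 μ) (hO₀ : MemLp O₀ 2 μ) (hO₁ : MemLp O₁ 2 μ)
    (hSig : (covMat μ X).PosDef)
    (π : ℝ)
    (β₀ β₁ : Fin d → ℝ)
    (hβ₀ : β₀ = (covMat μ X)⁻¹.mulVec (covVec μ X O₀))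
    (hβ₁ : β₁ = (covMat μ X)⁻¹.mulVec (covVec μ X O₁)) :
    π * evar μ (fun ω => O₁ ω - ∑ k, X ω k * β₁ k)
      + (1 - π) * evar μ (fun ω => O₀ ω - ∑ k, X ω k * β₀ k)
      + (π • β₁ - (1 - π) • β₀) ⬝ᵥ (covMat μ X).mulVec (π • β₁ - (1 - π) • β₀)
    = π * evar μ O₁ + (1 - π) * evar μ O₀
      - π * (1 - π) * ((β₁ + β₀) ⬝ᵥ (covMat μ X).mulVec (β₁ + β₀)) := by
  have hdet : IsUnit (covMat μ X).det := hSig.det_pos.ne'.isUnit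
  have normal_eq : ∀ {β : Fin d → ℝ} {f : Ω → ℝ},
      β = (covMat μ X)⁻¹ *ᵥ covVec μ X f → covMat μ X *ᵥ β = covVec μ X f := by
    rintro β f rfl
    rw [mulVec_mulVec, mul_nonsing_inv _ hdet, one_mulVec]
  rw [evar_sub_sum_mul_of_mulVec_eq hX.eval hO₁ (normal_eq hβ₁),
    evar_sub_sum_mul_of_mulVec_eq hX.eval hO₀ (normal_eq hβ₀),
    (covMat_isSymm X).dotProduct_mulVec_smul_sub_smul]
  ring

/-- variance decomposition identity for the adjusted statistic:
`π Var(O₁ - Xᵀβ₁) + (1-π) Var(O₀ - Xᵀβ₀) + (πβ₁-(1-π)β₀)ᵀ Σ_X (πβ₁-(1-π)β₀)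
  = π Var(O₁) + (1-π) Var(O₀) - π(1-π)(β₁+β₀)ᵀ Σ_X (β₁+β₀)`. -/
theorem stmt2 {Ω : Type*} [MeasurableSpace Ω] (μ : Measure Ω) [IsProbabilityMeasure μ]
    {d : ℕ} (X : Ω → Fin d → ℝ) (O₀ O₁ : Ω → ℝ)
    (hX : MemLp X 2 μ) (hO₀ : MemLp O₀ 2 μ) (hO₁ : MemLp O₁ 2 μ)
    (hSig : (covMat μ X).PosDef)
    (π : ℝ) (hπ : 0 < π) (hπ1 : π < 1)
    (β₀ β₁ : Fin d → ℝ)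
    (hβ₀ : β₀ = (covMat μ X)⁻¹.mulVec (covVec μ X O₀))
    (hβ₁ : β₁ = (covMat μ X)⁻¹.mulVec (covVec μ X O₁)) :
    π * evar μ (fun ω => O₁ ω - ∑ k, X ω k * β₁ k)
      + (1 - π) * evar μ (fun ω => O₀ ω - ∑ k, X ω k * β₀ k)
      + (π • β₁ - (1 - π) • β₀) ⬝ᵥ (covMat μ X).mulVec (π • β₁ - (1 - π) • β₀)
    = π * evar μ O₁ + (1 - π) * evar μ O₀
      - π * (1 - π) * ((β₁ + β₀) ⬝ᵥ (covMat μ X).mulVec (β₁ + β₀)) :=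
  stmt2_general μ X O₀ O₁ hX hO₀ hO₁ hSig π β₀ β₁ hβ₀ hβ₁
end

section
/- Let (A_n) and (B_n) be real random variables on a common probability space and (G_n) sub-σ-algebras such that B_n is G_n-measurable. Suppose for every continuity point t of a cdf F₁, P(A_n ≤ t | G_n) → F₁(t) in probability, and B_n converges in distribution to a law with cdf F₂. Then (A_n, B_n) converges jointly in distribution to the product law F₁ ⊗ F₂; in particular the limits are independent. -/
open MeasureTheory ProbabilityTheory Filter Matrix Set
open scoped BigOperators NNReal Topology ProbabilityTheory

section Stmt12Aux

variable {Ω : Type*} {mΩ : MeasurableSpace Ω} {μ : Measure Ω} [IsProbabilityMeasure μ]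

private lemma stmt12_aux_L1 {X : ℕ → Ω → ℝ} {c : ℝ}
    (hmeas : ∀ n, StronglyMeasurable (X n))
    (hbd : ∀ n, ∀ᵐ ω ∂μ, |X n ω - c| ≤ 1)
    (h : ∀ ε, 0 < ε → Tendsto (fun n => μ { x | ε ≤ dist (X n x) c }) atTop (𝓝 0)) :
    Tendsto (fun n => ∫ ω, |X n ω - c| ∂μ) atTop (𝓝 0) := by
  rw [Metric.tendsto_atTop]
  intro ε hε
  have hμ := h (ε/2) (by positivity)
  have hto : Tendsto (fun n => (μ {ω | ε/2 ≤ dist (X n ω) c}).toReal) atTop (𝓝 0) := by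
    have := (ENNReal.tendsto_toReal (a := 0) (by simp)).comp hμ
    simpa [Function.comp_def] using this
  have hev := hto.eventually_lt_const (show (0:ℝ) < ε/2 by positivity)
  rw [eventually_atTop] at hev
  obtain ⟨N, hN⟩ := hev
  refine ⟨N, fun n hn => ?_⟩
  have hEmeas : MeasurableSet {ω | ε/2 ≤ dist (X n ω) c} :=
    measurableSet_le measurable_const ((hmeas n).measurable.dist measurable_const)
  have hint1 : Integrable (fun ω => |X n ω - c|) μ := by
    refine (MemLp.of_bound (p := 1)
      ((((hmeas n).sub stronglyMeasurable_const).measurable.abs).aestronglyMeasurable) 1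
      ?_).integrable le_rfl
    filter_upwards [hbd n] with ω hω
    simpa [abs_abs, Real.norm_eq_abs] using hω
  have hint2 : Integrable (fun ω => ε/2 +
      Set.indicator {ω | ε/2 ≤ dist (X n ω) c} (fun _ => (1:ℝ)) ω) μ :=
    (integrable_const _).add ((integrable_const 1).indicator hEmeas)
  have hle : (fun ω => |X n ω - c|) ≤ᵐ[μ] fun ω => ε/2 +
      Set.indicator {ω | ε/2 ≤ dist (X n ω) c} (fun _ => (1:ℝ)) ω := by
    filter_upwards [hbd n] with ω hω
    by_cases hc : ε/2 ≤ dist (X n ω) c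
    · simp only [Set.indicator_of_mem, Set.mem_setOf_eq, hc]
      linarith
    · simp only [Set.indicator_of_notMem, Set.mem_setOf_eq, hc, not_false_iff, add_zero]
      rw [Real.dist_eq] at hc
      linarith [not_le.mp hc]
  have hmono := integral_mono_ae hint1 hint2 hle
  have hcalc : ∫ ω, (ε/2 + Set.indicator {ω | ε/2 ≤ dist (X n ω) c} (fun _ => (1:ℝ)) ω) ∂μ
      = ε/2 + (μ {ω | ε/2 ≤ dist (X n ω) c}).toReal := by
    rw [integral_add (integrable_const _) ((integrable_const 1).indicator hEmeas)]
    rw [integral_const, integral_indicator_const _ hEmeas]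
    simp [Measure.real]
  have hnonneg : 0 ≤ ∫ ω, |X n ω - c| ∂μ := integral_nonneg fun ω => abs_nonneg _
  have := hN n hn
  rw [Real.dist_eq]
  rw [abs_of_nonneg (by linarith : (0:ℝ) ≤ ∫ ω, |X n ω - c| ∂μ - 0)]
  linarith [hmono, hcalc ▸ hmono]

private lemma stmt12_aux_set_tendsto {A : ℕ → Ω → ℝ} {G : ℕ → MeasurableSpace Ω}
    (hG : ∀ n, G n ≤ mΩ)
    (hA : ∀ n, Measurable (A n)) {ν₁ : Measure ℝ} [IsProbabilityMeasure ν₁] {t : ℝ}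
    (hc : TendstoInMeasure μ
      (fun n => μ[Set.indicator {ω | A n ω ≤ t} (fun _ => (1 : ℝ)) | G n]) atTop
      (fun _ => (ν₁ (Set.Iic t)).toReal))
    {s : ℕ → Set Ω} (hs : ∀ n, MeasurableSet[G n] (s n)) :
    Tendsto (fun n => (μ (s n ∩ {ω | A n ω ≤ t})).toReal
      - (ν₁ (Set.Iic t)).toReal * (μ (s n)).toReal) atTop (𝓝 0) := by
  set c : ℝ := (ν₁ (Set.Iic t)).toReal with hcdef
  set X : ℕ → Ω → ℝ := fun n => μ[Set.indicator {ω | A n ω ≤ t} (fun _ => (1 : ℝ)) | G n]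
    with hXdef
  have hc01 : 0 ≤ c ∧ c ≤ 1 := by
    constructor
    · exact ENNReal.toReal_nonneg
    · rw [hcdef]
      simpa using ENNReal.toReal_mono (by simp) (prob_le_one (μ := ν₁) (s := Set.Iic t))
  have hEmeas : ∀ n, MeasurableSet {ω | A n ω ≤ t} := fun n => (hA n) measurableSet_Iic
  have hind_int : ∀ n, Integrable (Set.indicator {ω | A n ω ≤ t} (fun _ => (1:ℝ))) μ :=
    fun n => (integrable_const 1).indicator (hEmeas n)
  have hXmeas : ∀ n, StronglyMeasurable (X n) :=
    fun n => stronglyMeasurable_condExp.mono (hG n)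
  have hX0 : ∀ n, 0 ≤ᵐ[μ] X n := fun n =>
    condExp_nonneg (Filter.Eventually.of_forall fun ω => Set.indicator_nonneg (by simp) ω)
  have hX1 : ∀ n, X n ≤ᵐ[μ] fun _ => (1:ℝ) := by
    intro n
    have h1 : X n ≤ᵐ[μ] μ[(fun _ => (1:ℝ)) | G n] := by
      refine condExp_mono (hind_int n) (integrable_const 1)
        (Filter.Eventually.of_forall fun ω => ?_)
      exact Set.indicator_le_self' (by simp) ω
    have h2 : μ[(fun _ => (1:ℝ)) | G n] = fun _ => (1:ℝ) := condExp_const (hG n) 1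
    rw [h2] at h1
    exact h1
  have hbd : ∀ n, ∀ᵐ ω ∂μ, |X n ω - c| ≤ 1 := by
    intro n
    filter_upwards [hX0 n, hX1 n] with ω h0 h1
    rw [abs_le]
    have h0' : (0:ℝ) ≤ X n ω := h0
    constructor <;> linarith [hc01.1, hc01.2]
  have hL1 := stmt12_aux_L1 hXmeas hbd (tendstoInMeasure_iff_dist.mp hc)
  have hkey : ∀ n, (μ (s n ∩ {ω | A n ω ≤ t})).toReal - c * (μ (s n)).toReal
      = ∫ ω in s n, (X n ω - c) ∂μ := by
    intro n
    haveI : SigmaFinite (μ.trim (hG n)) := by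
      have : IsFiniteMeasure (μ.trim (hG n)) := isFiniteMeasure_trim (hG n)
      infer_instance
    have e1 : ∫ ω in s n, X n ω ∂μ = (μ (s n ∩ {ω | A n ω ≤ t})).toReal := by
      rw [hXdef]
      rw [setIntegral_condExp (hG n) (hind_int n) (hs n)]
      rw [setIntegral_indicator (hEmeas n)]
      rw [setIntegral_const]
      simp [Measure.real]
    have e2 : ∫ ω in s n, (fun _ => c) ω ∂μ = c * (μ (s n)).toReal := by
      rw [setIntegral_const]; rw [smul_eq_mul]; simp only [Measure.real]; ring
    rw [integral_sub (integrable_condExp.integrableOn) ((integrable_const c).integrableOn)]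
    rw [e1, e2]
  have habs : ∀ n, |(μ (s n ∩ {ω | A n ω ≤ t})).toReal - c * (μ (s n)).toReal|
      ≤ ∫ ω, |X n ω - c| ∂μ := by
    intro n
    rw [hkey n]
    have hint : Integrable (fun ω => X n ω - c) μ := integrable_condExp.sub (integrable_const c)
    calc |∫ ω in s n, (X n ω - c) ∂μ| ≤ ∫ ω in s n, |X n ω - c| ∂μ := by
          simpa [Real.norm_eq_abs] using
            norm_integral_le_integral_norm (μ := μ.restrict (s n)) (fun ω => X n ω - c)
      _ ≤ ∫ ω, |X n ω - c| ∂μ :=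
          setIntegral_le_integral hint.abs (Filter.Eventually.of_forall fun ω => abs_nonneg _)
  exact squeeze_zero_norm habs hL1

private lemma stmt12_aux_rect {A B : ℕ → Ω → ℝ} {G : ℕ → MeasurableSpace Ω} (hG : ∀ n, G n ≤ mΩ)
    (hA : ∀ n, Measurable (A n)) (hBmeas : ∀ n, @Measurable Ω ℝ (G n) _ (B n))
    {ν₁ ν₂ : Measure ℝ} [IsProbabilityMeasure ν₁] [IsProbabilityMeasure ν₂]
    (hcond : ∀ t : ℝ, ContinuousAt (fun s => (ν₁ (Set.Iic s)).toReal) t →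
      TendstoInMeasure μ
        (fun n => μ[Set.indicator {ω | A n ω ≤ t} (fun _ => (1 : ℝ)) | G n]) atTop
        (fun _ => (ν₁ (Set.Iic t)).toReal))
    (hBconv : ∀ c d : ℝ, ν₂ {c} = 0 → ν₂ {d} = 0 →
      Tendsto (fun n => (μ (B n ⁻¹' Set.Ioc c d)).toReal) atTop (𝓝 (ν₂ (Set.Ioc c d)).toReal))
    {a b c d : ℝ} (h1a : ContinuousAt (fun s => (ν₁ (Set.Iic s)).toReal) a)
    (h1b : ContinuousAt (fun s => (ν₁ (Set.Iic s)).toReal) b)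
    (h2c : ν₂ {c} = 0) (h2d : ν₂ {d} = 0) :
    Tendsto (fun n => (μ (A n ⁻¹' Set.Ioc a b ∩ B n ⁻¹' Set.Ioc c d)).toReal) atTop
      (𝓝 ((ν₁ (Set.Ioc a b)).toReal * (ν₂ (Set.Ioc c d)).toReal)) := by
  rcases le_or_gt a b with hab | hab
  · set s : ℕ → Set Ω := fun n => B n ⁻¹' Set.Ioc c d with hsdef
    have hs : ∀ n, MeasurableSet[G n] (s n) := fun n => (hBmeas n) measurableSet_Ioc
    have h_b := stmt12_aux_set_tendsto hG hA (hcond b h1b) hs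
    have h_a := stmt12_aux_set_tendsto hG hA (hcond a h1a) hs
    have hμs := hBconv c d h2c h2d
    have hsplit : ∀ n, (μ (s n ∩ {ω | A n ω ≤ b})).toReal
        = (μ (s n ∩ {ω | A n ω ≤ a})).toReal + (μ (s n ∩ A n ⁻¹' Set.Ioc a b)).toReal := by
      intro n
      have hset : s n ∩ {ω | A n ω ≤ b}
          = (s n ∩ {ω | A n ω ≤ a}) ∪ (s n ∩ A n ⁻¹' Set.Ioc a b) := by
        rw [← Set.inter_union_distrib_left]
        congr 1
        have : {ω | A n ω ≤ a} = A n ⁻¹' Set.Iic a := rfl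
        rw [this]
        rw [show {ω | A n ω ≤ b} = A n ⁻¹' Set.Iic b from rfl]
        rw [← Set.preimage_union, Set.Iic_union_Ioc_eq_Iic hab]
      have hdisj : Disjoint (s n ∩ {ω | A n ω ≤ a}) (s n ∩ A n ⁻¹' Set.Ioc a b) := by
        refine Disjoint.mono Set.inter_subset_right Set.inter_subset_right ?_
        exact Disjoint.preimage _ (Set.Iic_disjoint_Ioc (le_refl a))
      have hm2 : MeasurableSet (s n ∩ A n ⁻¹' Set.Ioc a b) :=
        (((hBmeas n).mono (hG n) le_rfl) measurableSet_Ioc).inter ((hA n) measurableSet_Ioc)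
      rw [hset, measure_union hdisj hm2, ENNReal.toReal_add (measure_ne_top _ _)
        (measure_ne_top _ _)]
    have hFba : (ν₁ (Set.Ioc a b)).toReal
        = (ν₁ (Set.Iic b)).toReal - (ν₁ (Set.Iic a)).toReal := by
      have h1 : Set.Ioc a b = Set.Iic b \ Set.Iic a := by ext x; simp [and_comm]
      rw [h1, measure_diff (Set.Iic_subset_Iic.mpr hab) measurableSet_Iic.nullMeasurableSet
        (measure_ne_top _ _)]
      exact ENNReal.toReal_sub_of_le (measure_mono (Set.Iic_subset_Iic.mpr hab))
        (measure_ne_top _ _)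
    have hcombined := (h_b.sub h_a).add
      ((tendsto_const_nhds (x := (ν₁ (Set.Iic b)).toReal - (ν₁ (Set.Iic a)).toReal)).mul hμs)
    have hlim : (0 - 0 : ℝ) + ((ν₁ (Set.Iic b)).toReal - (ν₁ (Set.Iic a)).toReal)
        * (ν₂ (Set.Ioc c d)).toReal
        = (ν₁ (Set.Ioc a b)).toReal * (ν₂ (Set.Ioc c d)).toReal := by
      rw [hFba]; ring
    rw [hlim] at hcombined
    refine hcombined.congr fun n => ?_
    rw [Set.inter_comm (A n ⁻¹' Set.Ioc a b) (B n ⁻¹' Set.Ioc c d)]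
    have := hsplit n
    linarith
  · have hempty : Set.Ioc a b = (∅ : Set ℝ) := Set.Ioc_eq_empty (not_lt.mpr hab.le)
    simp only [hempty, Set.preimage_empty, Set.empty_inter, measure_empty,
      ENNReal.toReal_zero, zero_mul]
    exact tendsto_const_nhds

end Stmt12Aux

private def rectOf (r : ℝ × ℝ × ℝ × ℝ) : Set (ℝ × ℝ) :=
  Set.Ioc r.1 r.2.1 ×ˢ Set.Ioc r.2.2.1 r.2.2.2

private def interR (r r' : ℝ × ℝ × ℝ × ℝ) : ℝ × ℝ × ℝ × ℝ :=
  (max r.1 r'.1, min r.2.1 r'.2.1, max r.2.2.1 r'.2.2.1, min r.2.2.2 r'.2.2.2)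

private def UL (L : List (ℝ × ℝ × ℝ × ℝ)) : Set (ℝ × ℝ) :=
  L.foldr (fun r s => rectOf r ∪ s) ∅

private def goodR (ν₁ ν₂ : Measure ℝ) (r : ℝ × ℝ × ℝ × ℝ) : Prop :=
  ContinuousAt (fun s => (ν₁ (Set.Iic s)).toReal) r.1
  ∧ ContinuousAt (fun s => (ν₁ (Set.Iic s)).toReal) r.2.1
  ∧ ν₂ {r.2.2.1} = 0 ∧ ν₂ {r.2.2.2} = 0

private lemma rect_inter (r r' : ℝ × ℝ × ℝ × ℝ) :
    rectOf r ∩ rectOf r' = rectOf (interR r r') := by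
  simp [rectOf, interR, Set.prod_inter_prod, Set.Ioc_inter_Ioc]

private lemma goodR_inter {ν₁ ν₂ : Measure ℝ} {r r' : ℝ × ℝ × ℝ × ℝ}
    (h : goodR ν₁ ν₂ r) (h' : goodR ν₁ ν₂ r') : goodR ν₁ ν₂ (interR r r') := by
  obtain ⟨h1, h2, h3, h4⟩ := h
  obtain ⟨h1', h2', h3', h4'⟩ := h'
  refine ⟨?_, ?_, ?_, ?_⟩
  · rcases max_choice r.1 r'.1 with h | h <;> · show ContinuousAt _ (max _ _); rw [h]; assumption
  · rcases min_choice r.2.1 r'.2.1 with h | h <;>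
      · show ContinuousAt _ (min _ _); rw [h]; assumption
  · rcases max_choice r.2.2.1 r'.2.2.1 with h | h <;>
      · show ν₂ {max _ _} = 0; rw [h]; assumption
  · rcases min_choice r.2.2.2 r'.2.2.2 with h | h <;>
      · show ν₂ {min _ _} = 0; rw [h]; assumption

private lemma UL_nil : UL [] = ∅ := rfl

private lemma UL_cons (r : ℝ × ℝ × ℝ × ℝ) (L : List (ℝ × ℝ × ℝ × ℝ)) :
    UL (r :: L) = rectOf r ∪ UL L := rfl

private lemma measurableSet_rectOf (r : ℝ × ℝ × ℝ × ℝ) : MeasurableSet (rectOf r) :=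
  measurableSet_Ioc.prod measurableSet_Ioc

private lemma measurableSet_UL (L : List (ℝ × ℝ × ℝ × ℝ)) : MeasurableSet (UL L) := by
  induction L with
  | nil => exact MeasurableSet.empty
  | cons r L ih => rw [UL_cons]; exact (measurableSet_rectOf r).union ih

private lemma inter_UL (r : ℝ × ℝ × ℝ × ℝ) (L : List (ℝ × ℝ × ℝ × ℝ)) :
    rectOf r ∩ UL L = UL (L.map (interR r)) := by
  induction L with
  | nil => simp [UL_nil]
  | cons r' L ih =>
    rw [UL_cons, List.map_cons, UL_cons, Set.inter_union_distrib_left, ih, rect_inter]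

private lemma mem_UL {p : ℝ × ℝ} {L : List (ℝ × ℝ × ℝ × ℝ)} :
    p ∈ UL L ↔ ∃ r ∈ L, p ∈ rectOf r := by
  induction L with
  | nil => simp [UL_nil]
  | cons r L ih => simp [UL_cons, ih]

private lemma stmt12_aux_list {Ω : Type*} {mΩ : MeasurableSpace Ω} {μ : Measure Ω}
    [IsProbabilityMeasure μ]
    {A B : ℕ → Ω → ℝ} (hA : ∀ n, Measurable (A n)) (hB : ∀ n, Measurable (B n))
    {ν₁ ν₂ : Measure ℝ} [IsProbabilityMeasure ν₁] [IsProbabilityMeasure ν₂]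
    (hconv_rect : ∀ r, goodR ν₁ ν₂ r →
      Tendsto (fun n => (μ ((fun ω => (A n ω, B n ω)) ⁻¹' rectOf r)).toReal) atTop
        (𝓝 (((ν₁.prod ν₂) (rectOf r)).toReal))) :
    ∀ (k : ℕ) (L : List (ℝ × ℝ × ℝ × ℝ)), L.length = k → (∀ r ∈ L, goodR ν₁ ν₂ r) →
      Tendsto (fun n => (μ ((fun ω => (A n ω, B n ω)) ⁻¹' UL L)).toReal) atTop
        (𝓝 (((ν₁.prod ν₂) (UL L)).toReal)) := by
  intro k
  induction k using Nat.strong_induction_on with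
  | _ k ih =>
    intro L hlen hgood
    match L, hlen with
    | [], hlen =>
      simp only [UL_nil, Set.preimage_empty, measure_empty, ENNReal.toReal_zero]
      exact tendsto_const_nhds
    | r :: L', hlen =>
      have hmeasp : ∀ n, Measurable fun ω => (A n ω, B n ω) :=
        fun n => (hA n).prodMk (hB n)
      have hgr : goodR ν₁ ν₂ r := hgood r (List.mem_cons_self)
      have hgL' : ∀ r' ∈ L', goodR ν₁ ν₂ r' := fun r' h => hgood r' (List.mem_cons_of_mem r h)
      have hgmap : ∀ r' ∈ L'.map (interR r), goodR ν₁ ν₂ r' := by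
        intro r' hr'
        obtain ⟨r'', hr'', rfl⟩ := List.mem_map.mp hr'
        exact goodR_inter hgr (hgL' r'' hr'')
      have hlen' : L'.length = k - 1 := by
        simp only [List.length_cons] at hlen; omega
      have hlenmap : (L'.map (interR r)).length = k - 1 := by
        rw [List.length_map]; exact hlen'
      have hklt : k - 1 < k := by
        simp only [List.length_cons] at hlen; omega
      have ih1 := ih (k - 1) hklt L' hlen' hgL'
      have ih2 := ih (k - 1) hklt (L'.map (interR r)) hlenmap hgmap
      have hrect := hconv_rect r hgr
      have key : ∀ (m : Measure (ℝ × ℝ)) [IsFiniteMeasure m],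
          (m (UL (r :: L'))).toReal
          = (m (rectOf r)).toReal + (m (UL L')).toReal
            - (m (UL (L'.map (interR r)))).toReal := by
        intro m _
        rw [UL_cons, ← inter_UL]
        have hmi := measure_union_add_inter (μ := m) (rectOf r) (measurableSet_UL L')
        have htr : (m (rectOf r ∪ UL L')).toReal + (m (rectOf r ∩ UL L')).toReal
            = (m (rectOf r)).toReal + (m (UL L')).toReal := by
          rw [← ENNReal.toReal_add (measure_ne_top _ _) (measure_ne_top _ _),
            ← ENNReal.toReal_add (measure_ne_top _ _) (measure_ne_top _ _), hmi]
        linarith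
      have hpre : ∀ n, (μ ((fun ω => (A n ω, B n ω)) ⁻¹' UL (r :: L'))).toReal
          = (μ ((fun ω => (A n ω, B n ω)) ⁻¹' rectOf r)).toReal
            + (μ ((fun ω => (A n ω, B n ω)) ⁻¹' UL L')).toReal
            - (μ ((fun ω => (A n ω, B n ω)) ⁻¹' UL (L'.map (interR r)))).toReal := by
        intro n
        haveI : IsFiniteMeasure (μ.map (fun ω => (A n ω, B n ω))) :=
          Measure.isFiniteMeasure_map μ _
        have h1 := key (μ.map (fun ω => (A n ω, B n ω)))
        rw [Measure.map_apply (hmeasp n) (measurableSet_UL _),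
          Measure.map_apply (hmeasp n) (measurableSet_rectOf _),
          Measure.map_apply (hmeasp n) (measurableSet_UL _),
          Measure.map_apply (hmeasp n) (measurableSet_UL _)] at h1
        exact h1
      have hν := key (ν₁.prod ν₂)
      have hcomb := (hrect.add ih1).sub ih2
      rw [← hν] at hcomb
      refine hcomb.congr fun n => ?_
      rw [hpre n]

/-- asymptotic independence: if the conditional cdfs of `A_n` given
`G_n` converge in probability to `F₁` at its continuity points, `B_n` is
`G_n`-measurable and converges in distribution to `F₂`, then `(A_n, B_n)` converges
jointly in distribution to the product law `F₁ ⊗ F₂`. -/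
theorem stmt12 {Ω : Type*} {mΩ : MeasurableSpace Ω} (μ : Measure Ω) [IsProbabilityMeasure μ]
    (A B : ℕ → Ω → ℝ) (G : ℕ → MeasurableSpace Ω) (hG : ∀ n, G n ≤ mΩ)
    (hA : ∀ n, Measurable (A n)) (hBmeas : ∀ n, @Measurable Ω ℝ (G n) _ (B n))
    (ν₁ ν₂ : Measure ℝ) [IsProbabilityMeasure ν₁] [IsProbabilityMeasure ν₂]
    (hcond : ∀ t : ℝ, ContinuousAt (fun s => (ν₁ (Set.Iic s)).toReal) t →
      TendstoInMeasure μ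
        (fun n => μ[Set.indicator {ω | A n ω ≤ t} (fun _ => (1 : ℝ)) | G n]) atTop
        (fun _ => (ν₁ (Set.Iic t)).toReal))
    (hB : ∀ g : BoundedContinuousFunction ℝ ℝ,
      Tendsto (fun n => ∫ ω, g (B n ω) ∂μ) atTop (𝓝 (∫ x, g x ∂ν₂))) :
    ∀ g : BoundedContinuousFunction (ℝ × ℝ) ℝ,
      Tendsto (fun n => ∫ ω, g (A n ω, B n ω) ∂μ) atTop
        (𝓝 (∫ p, g p ∂(ν₁.prod ν₂))) := by
  have Bm : ∀ n, Measurable (B n) := fun n => (hBmeas n).mono (hG n) le_rfl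
  have pairM : ∀ n, Measurable fun ω => (A n ω, B n ω) := fun n => (hA n).prodMk (Bm n)
  -- the marginal distributions of B converge weakly to ν₂
  let Q : ℕ → ProbabilityMeasure ℝ := fun n =>
    ⟨μ.map (B n), Measure.isProbabilityMeasure_map (Bm n).aemeasurable⟩
  let ν₂' : ProbabilityMeasure ℝ := ⟨ν₂, inferInstance⟩
  have hQ : Tendsto Q atTop (𝓝 ν₂') := by
    rw [ProbabilityMeasure.tendsto_iff_forall_integral_tendsto]
    intro f
    have heq : ∀ n, ∫ x, f x ∂((Q n : Measure ℝ)) = ∫ ω, f (B n ω) ∂μ := fun n =>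
      integral_map (Bm n).aemeasurable f.continuous.aestronglyMeasurable
    simp only [heq]
    exact hB f
  have hBconv : ∀ c d : ℝ, ν₂ {c} = 0 → ν₂ {d} = 0 →
      Tendsto (fun n => (μ (B n ⁻¹' Set.Ioc c d)).toReal) atTop
        (𝓝 (ν₂ (Set.Ioc c d)).toReal) := by
    intro c d h2c h2d
    rcases lt_or_ge c d with hcd | hcd
    · have hnull : (ν₂' : Measure ℝ) (frontier (Set.Ioc c d)) = 0 := by
        show ν₂ (frontier (Set.Ioc c d)) = 0
        rw [frontier_Ioc hcd]
        refine le_antisymm ?_ zero_le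
        calc ν₂ {c, d} ≤ ν₂ {c} + ν₂ {d} := by
              rw [Set.insert_eq]; exact measure_union_le _ _
          _ = 0 := by rw [h2c, h2d, add_zero]
      have key := ProbabilityMeasure.tendsto_measure_of_null_frontier_of_tendsto' hQ hnull
      have key2 := (ENNReal.tendsto_toReal (measure_ne_top _ _)).comp key
      refine key2.congr fun n => ?_
      show ((Q n : Measure ℝ) (Set.Ioc c d)).toReal = _
      rw [show (Q n : Measure ℝ) = μ.map (B n) from rfl,
        Measure.map_apply (Bm n) measurableSet_Ioc]
    · simp only [Set.Ioc_eq_empty (not_lt.mpr hcd), Set.preimage_empty, measure_empty,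
        ENNReal.toReal_zero]
      exact tendsto_const_nhds
  -- convergence on good rectangles
  have hrect : ∀ r, goodR ν₁ ν₂ r →
      Tendsto (fun n => (μ ((fun ω => (A n ω, B n ω)) ⁻¹' rectOf r)).toReal) atTop
        (𝓝 (((ν₁.prod ν₂) (rectOf r)).toReal)) := by
    intro r hr
    obtain ⟨h1, h2, h3, h4⟩ := hr
    have haux := stmt12_aux_rect hG hA hBmeas hcond hBconv h1 h2 h3 h4
    have hval : ((ν₁.prod ν₂) (rectOf r)).toReal
        = (ν₁ (Set.Ioc r.1 r.2.1)).toReal * (ν₂ (Set.Ioc r.2.2.1 r.2.2.2)).toReal := by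
      rw [show rectOf r = Set.Ioc r.1 r.2.1 ×ˢ Set.Ioc r.2.2.1 r.2.2.2 from rfl,
        Measure.prod_prod, ENNReal.toReal_mul]
    rw [hval]
    refine haux.congr fun n => ?_
    rw [show (fun ω => (A n ω, B n ω)) ⁻¹' rectOf r
      = A n ⁻¹' Set.Ioc r.1 r.2.1 ∩ B n ⁻¹' Set.Ioc r.2.2.1 r.2.2.2 from
      Set.mk_preimage_prod _ _]
  have hlist := stmt12_aux_list hA Bm hrect
  -- density of good endpoints
  have hmono₁ : Monotone (fun s => (ν₁ (Set.Iic s)).toReal) := fun x y hxy =>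
    ENNReal.toReal_mono (measure_ne_top _ _) (measure_mono (Set.Iic_subset_Iic.mpr hxy))
  have hbad1 : Set.Countable {x : ℝ | ¬ ContinuousAt (fun s => (ν₁ (Set.Iic s)).toReal) x} :=
    hmono₁.countable_not_continuousAt
  have hbad2 : Set.Countable {x : ℝ | ν₂ {x} ≠ 0} := by
    have h := Measure.countable_meas_pos_of_disjoint_iUnion (μ := ν₂)
      (As := fun x : ℝ => ({x} : Set ℝ)) (fun x => measurableSet_singleton x)
      (fun i j hij => by simpa using hij)
    refine h.mono fun x hx => ?_
    simpa [pos_iff_ne_zero] using hx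
  have hdense1 : Dense {x : ℝ | ContinuousAt (fun s => (ν₁ (Set.Iic s)).toReal) x} := by
    have := hbad1.dense_compl ℝ
    simpa [Set.compl_setOf, not_not] using this
  have hdense2 : Dense {x : ℝ | ν₂ {x} = 0} := by
    have := hbad2.dense_compl ℝ
    simpa [Set.compl_setOf, not_not] using this
  obtain ⟨t₁, ht₁sub, ht₁c, ht₁d⟩ := hdense1.exists_countable_dense_subset
  obtain ⟨t₂, ht₂sub, ht₂c, ht₂d⟩ := hdense2.exists_countable_dense_subset
  -- joint laws converge weakly
  let P : ℕ → ProbabilityMeasure (ℝ × ℝ) := fun n =>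
    ⟨μ.map (fun ω => (A n ω, B n ω)), Measure.isProbabilityMeasure_map (pairM n).aemeasurable⟩
  let ν' : ProbabilityMeasure (ℝ × ℝ) := ⟨ν₁.prod ν₂, inferInstance⟩
  have hmain : Tendsto P atTop (𝓝 ν') := by
    apply tendsto_of_forall_isOpen_le_liminf
    intro Gs hGs
    set T : Set (ℝ × ℝ × ℝ × ℝ) :=
      {r | r.1 ∈ t₁ ∧ r.2.1 ∈ t₁ ∧ r.2.2.1 ∈ t₂ ∧ r.2.2.2 ∈ t₂ ∧ rectOf r ⊆ Gs} with hT
    have hTc : T.Countable := by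
      have hsub : T ⊆ t₁ ×ˢ t₁ ×ˢ t₂ ×ˢ t₂ := fun r hr =>
        ⟨hr.1, hr.2.1, hr.2.2.1, hr.2.2.2.1⟩
      exact Set.Countable.mono hsub (ht₁c.prod (ht₁c.prod (ht₂c.prod ht₂c)))
    have hcover : ⋃ r ∈ T, rectOf r = Gs := by
      apply Set.Subset.antisymm
      · intro p hp
        simp only [Set.mem_iUnion] at hp
        obtain ⟨r, hr, hpr⟩ := hp
        exact hr.2.2.2.2 hpr
      · intro p hp
        obtain ⟨δ, hδ, hball⟩ := Metric.isOpen_iff.mp hGs p hp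
        obtain ⟨a, hat, haI⟩ := ht₁d.exists_mem_open isOpen_Ioo
          (Set.nonempty_Ioo.mpr (by linarith : p.1 - δ < p.1))
        obtain ⟨b, hbt, hbI⟩ := ht₁d.exists_mem_open isOpen_Ioo
          (Set.nonempty_Ioo.mpr (by linarith : p.1 < p.1 + δ))
        obtain ⟨c, hct, hcI⟩ := ht₂d.exists_mem_open isOpen_Ioo
          (Set.nonempty_Ioo.mpr (by linarith : p.2 - δ < p.2))
        obtain ⟨d, hdt, hdI⟩ := ht₂d.exists_mem_open isOpen_Ioo
          (Set.nonempty_Ioo.mpr (by linarith : p.2 < p.2 + δ))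
        have hrect_sub : rectOf (a, b, c, d) ⊆ Gs := by
          intro q hq
          apply hball
          have hq1 : q.1 ∈ Set.Ioc a b := hq.1
          have hq2 : q.2 ∈ Set.Ioc c d := hq.2
          have h1 : q.1 ∈ Metric.ball p.1 δ := by
            rw [Real.ball_eq_Ioo]
            exact ⟨haI.1.trans hq1.1, hq1.2.trans_lt hbI.2⟩
          have h2 : q.2 ∈ Metric.ball p.2 δ := by
            rw [Real.ball_eq_Ioo]
            exact ⟨hcI.1.trans hq2.1, hq2.2.trans_lt hdI.2⟩
          have hmemball : q ∈ Metric.ball p.1 δ ×ˢ Metric.ball p.2 δ := ⟨h1, h2⟩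
          rwa [ball_prod_same] at hmemball
        have hmem : p ∈ rectOf (a, b, c, d) :=
          ⟨⟨haI.2, hbI.1.le⟩, ⟨hcI.2, hdI.1.le⟩⟩
        exact Set.mem_iUnion₂.mpr ⟨(a, b, c, d), ⟨hat, hbt, hct, hdt, hrect_sub⟩, hmem⟩
    rcases Set.eq_empty_or_nonempty T with hTe | hTne
    · have hGe : Gs = ∅ := by
        rw [← hcover, hTe]
        simp
      show ((ν₁.prod ν₂) Gs).toNNReal ≤ _
      rw [hGe]
      simp
    · obtain ⟨f, hf⟩ := hTc.exists_eq_range hTne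
      have hfT : ∀ i, f i ∈ T := fun i => hf ▸ Set.mem_range_self i
      set L : ℕ → List (ℝ × ℝ × ℝ × ℝ) := fun N => (List.range N).map f with hL
      have hgoodL : ∀ N, ∀ r ∈ L N, goodR ν₁ ν₂ r := by
        intro N r hr
        obtain ⟨i, _, rfl⟩ := List.mem_map.mp hr
        exact ⟨ht₁sub (hfT i).1, ht₁sub (hfT i).2.1, ht₂sub (hfT i).2.2.1,
          ht₂sub (hfT i).2.2.2.1⟩
      have hVsub : ∀ N, UL (L N) ⊆ Gs := by
        intro N p hp
        obtain ⟨r, hr, hpr⟩ := mem_UL.mp hp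
        obtain ⟨i, _, rfl⟩ := List.mem_map.mp hr
        exact (hfT i).2.2.2.2 hpr
      have hmonoV : Monotone (fun N => UL (L N)) := by
        intro N M hNM p hp
        obtain ⟨r, hr, hpr⟩ := mem_UL.mp hp
        refine mem_UL.mpr ⟨r, ?_, hpr⟩
        obtain ⟨i, hi, rfl⟩ := List.mem_map.mp hr
        exact List.mem_map.mpr ⟨i, List.mem_range.mpr
          (lt_of_lt_of_le (List.mem_range.mp hi) hNM), rfl⟩
      have hUnionV : ⋃ N, UL (L N) = Gs := by
        apply Set.Subset.antisymm
        · exact Set.iUnion_subset hVsub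
        · intro p hp
          rw [← hcover] at hp
          obtain ⟨r, hrT, hpr⟩ := Set.mem_iUnion₂.mp hp
          rw [hf] at hrT
          obtain ⟨i, rfl⟩ := hrT
          exact Set.mem_iUnion.mpr ⟨i + 1, mem_UL.mpr ⟨f i,
            List.mem_map.mpr ⟨i, List.mem_range.mpr (Nat.lt_succ_self i), rfl⟩, hpr⟩⟩
      have hνV : Tendsto (fun N => (ν₁.prod ν₂) (UL (L N))) atTop (𝓝 ((ν₁.prod ν₂) Gs)) := by
        have := tendsto_measure_iUnion_atTop (μ := ν₁.prod ν₂) hmonoV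
        rwa [hUnionV] at this
      have hA1 : ∀ N, ((ν₁.prod ν₂) (UL (L N))).toNNReal
          ≤ atTop.liminf (fun i => P i Gs) := by
        intro N
        set w : ℕ → ℝ≥0 :=
          fun n => (μ ((fun ω => (A n ω, B n ω)) ⁻¹' UL (L N))).toNNReal with hw_def
        have hw : Tendsto w atTop (𝓝 (((ν₁.prod ν₂) (UL (L N))).toNNReal)) := by
          rw [← NNReal.tendsto_coe]
          exact hlist (L N).length (L N) rfl (hgoodL N)
        have hwle : ∀ n, w n ≤ P n Gs := by
          intro n
          show (μ _).toNNReal ≤ ((P n : Measure (ℝ × ℝ)) Gs).toNNReal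
          refine ENNReal.toNNReal_mono (measure_ne_top _ _) ?_
          rw [show (P n : Measure (ℝ × ℝ)) = μ.map (fun ω => (A n ω, B n ω)) from rfl,
            Measure.map_apply (pairM n) hGs.measurableSet]
          exact measure_mono (Set.preimage_mono (hVsub N))
        calc ((ν₁.prod ν₂) (UL (L N))).toNNReal = atTop.liminf w := hw.liminf_eq.symm
          _ ≤ atTop.liminf (fun i => P i Gs) := by
            refine Filter.liminf_le_liminf (Filter.Eventually.of_forall hwle) ?_ ?_
            · exact Filter.isBoundedUnder_of ⟨0, fun n => by simp⟩
            · exact (Filter.isBoundedUnder_of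
                ⟨1, fun n => ProbabilityMeasure.apply_le_one _ _⟩).isCoboundedUnder_ge
      have hA2 : Tendsto (fun N => ((ν₁.prod ν₂) (UL (L N))).toNNReal) atTop
          (𝓝 (((ν₁.prod ν₂) Gs).toNNReal)) :=
        (ENNReal.tendsto_toNNReal (measure_ne_top _ _)).comp hνV
      have hfinal := le_of_tendsto hA2 (Filter.Eventually.of_forall hA1)
      exact hfinal
  intro g
  have hfin := ProbabilityMeasure.tendsto_iff_forall_integral_tendsto.mp hmain g
  have heq : ∀ n, ∫ p, g p ∂((P n : Measure (ℝ × ℝ))) = ∫ ω, g (A n ω, B n ω) ∂μ := fun n =>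
    integral_map (pairM n).aemeasurable g.continuous.aestronglyMeasurable
  simp only [heq] at hfin
  exact hfin
end
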